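/- The space of permitted colorings of the 4-simplex Δ⁴ = 12345 (the intersection of kernels of the ten edge functionals) is exactly the linear span of the ten edge vectors ψ_b, b ranging over the edges of Δ⁴. -/

import Mathlib

open Finset

/-- position (0-based) of vertex `v` in the increasing order of vertices of `t`. -/
def idx (t : Finset ℕ) (v : ℕ) : ℕ := (t.filter (· < v)).card

/-- coefficient rows of the constant edge functionals on a tetrahedron,
indexed by the (0-based) positions of the two vertices of the edge. -/
def phiRow : ℕ → ℕ → ℤ × ℤ
  | 0, 1 => (0, 1)
  | 0, 2 => (1, -1)
  | 0, 3 => (-1, 0)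
  | 1, 2 => (-1, 0)
  | 1, 3 => (1, 1)
  | 2, 3 => (0, -1)
  | _, _ => (0, 0)

/-- components of the constant edge vectors on a tetrahedron,
indexed by the (0-based) positions of the two vertices of the edge. -/
def psiRow : ℕ → ℕ → ℤ × ℤ
  | 0, 1 => (1, 0)
  | 0, 2 => (-1, 1)
  | 0, 3 => (0, -1)
  | 1, 2 => (0, -1)
  | 1, 3 => (1, 1)
  | 2, 3 => (-1, 0)
  | _, _ => (0, 0)

variable (F : Type) [Field F]

/-- the `x`-component of the color of tetrahedron `t`, as a linear functional. -/
noncomputable def evalX (t : Finset ℕ) : (Finset ℕ → F × F) →ₗ[F] F :=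
  (LinearMap.fst F F F).comp (LinearMap.proj (R := F) (φ := fun _ : Finset ℕ => F × F) t)

/-- the `y`-component of the color of tetrahedron `t`, as a linear functional. -/
noncomputable def evalY (t : Finset ℕ) : (Finset ℕ → F × F) →ₗ[F] F :=
  (LinearMap.snd F F F).comp (LinearMap.proj (R := F) (φ := fun _ : Finset ℕ => F × F) t)

/-- the edge functional `φ_{jk}` of the pentachoron `u`, as a linear functional
on colorings (the tetrahedron opposite vertex `i` contributes with sign `(-1)^(i+1)`,
`i` counted 1-based, i.e. `(-1)^(idx u i)`). -/
noncomputable def phiLin (u : Finset ℕ) (j k : ℕ) : (Finset ℕ → F × F) →ₗ[F] F :=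
  ∑ i ∈ u \ {j, k},
    ((-1 : F) ^ idx u i) •
      ((((phiRow (idx (u.erase i) j) (idx (u.erase i) k)).1 : F) • evalX F (u.erase i)) +
       (((phiRow (idx (u.erase i) j) (idx (u.erase i) k)).2 : F) • evalY F (u.erase i)))

/-- a coloring is permitted on the simplex with vertex set `S` if all edge functionals
of all pentachora (5-element subsets) of `S` annihilate it. -/
def Permitted (S : Finset ℕ) (c : Finset ℕ → F × F) : Prop :=
  ∀ u ⊆ S, u.card = 5 → ∀ j ∈ u, ∀ k ∈ u, j < k → phiLin F u j k c = 0

/-- a coloring is permitted on a cluster `P` of pentachora if all edge functionals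
of all pentachora of `P` annihilate it. -/
def PermittedOn (P : Finset (Finset ℕ)) (c : Finset ℕ → F × F) : Prop :=
  ∀ u ∈ P, ∀ j ∈ u, ∀ k ∈ u, j < k → phiLin F u j k c = 0

/-- the edge vector `ψ_{jk}` (for `j < k`). -/
def psiVec (j k : ℕ) (t : Finset ℕ) : F × F :=
  if j ∈ t ∧ k ∈ t then
    (((psiRow (idx t j) (idx t k)).1 : F), ((psiRow (idx t j) (idx t k)).2 : F))
  else 0

open Classical in
/-- the edge vector `ψ_{jk}` with support cut down to the tetrahedra in `T`. -/
noncomputable def psiC (T : Set (Finset ℕ)) (j k : ℕ) (t : Finset ℕ) : F × F :=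
  if t ∈ T then psiVec F j k t else 0

/-- the submodule of permitted colorings of the simplex with vertex set `S`. -/
noncomputable def PermittedSub (S : Finset ℕ) : Submodule F (Finset ℕ → F × F) :=
  ⨅ (u : Finset ℕ) (_ : u ⊆ S ∧ u.card = 5) (p : ℕ × ℕ)
    (_ : p.1 ∈ u ∧ p.2 ∈ u ∧ p.1 < p.2), LinearMap.ker (phiLin F u p.1 p.2)

/-- the submodule of permitted colorings of a cluster `P` of pentachora. -/
noncomputable def PermittedSubOn (P : Finset (Finset ℕ)) : Submodule F (Finset ℕ → F × F) :=
  ⨅ (u : Finset ℕ) (_ : u ∈ P) (p : ℕ × ℕ)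
    (_ : p.1 ∈ u ∧ p.2 ∈ u ∧ p.1 < p.2), LinearMap.ker (phiLin F u p.1 p.2)

/-- colorings supported on the set `T` of tetrahedra. -/
noncomputable def Supported (T : Set (Finset ℕ)) : Submodule F (Finset ℕ → F × F) :=
  ⨅ (t : Finset ℕ) (_ : t ∉ T),
    LinearMap.ker (LinearMap.proj (R := F) (φ := fun _ : Finset ℕ => F × F) t)

/-- the increasing map identifying vertices `1, …` of `Δⁿ` with the vertices of the
face of `Δ^{n+1}` omitting vertex `k`. -/
def dmap (k i : ℕ) : ℕ := if i < k then i else i + 1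

/-- restriction of a coloring of `Δ^{n+1}` onto its face omitting vertex `k`,
identified order-preservingly with `Δⁿ`. -/
def restr (k : ℕ) (c : Finset ℕ → F × F) : Finset ℕ → F × F :=
  fun t => c (t.image (dmap k))

/-- the hexagon coboundary of an `n`-cochain (a function on colorings of `Δⁿ`). -/
noncomputable def hexδ (n : ℕ) (c : (Finset ℕ → F × F) → F) :
    (Finset ℕ → F × F) → F :=
  fun y => ∑ k ∈ Finset.Icc 1 (n + 2), (-1 : F) ^ (k + 1) * c (restr F k y)

/-!
Every edge functional annihilates every edge vector: these are finitely many identities with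
integer coefficients, checked over `ℤ` and transported to `F`. Conversely, writing `(xᵢ, yᵢ)`
for the color of the tetrahedron opposite vertex `i`, the functionals of the edges
`12, 13, 15, 23, 34` force a permitted coloring with `x₃ = 0` and `(x₄, y₄) = (x₅, y₅) = 0` to
vanish, while the edge vectors `ψ₄₅, ψ₃₅, ψ₁₅, ψ₃₄, ψ₂₄` realize arbitrary values of these five
coordinates. Subtracting the matching combination of edge vectors from a permitted coloring
therefore leaves zero.
-/

theorem Finset.exists_eq_erase_of_subset_of_card_add_one {α : Type*} [DecidableEq α]
    {s t : Finset α} (hts : t ⊆ s) (hcard : #t + 1 = #s) : ∃ a ∈ s, t = s.erase a := by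
  obtain ⟨a, ha⟩ := card_eq_one.1 (show #(s \ t) = 1 by rw [card_sdiff_of_subset hts]; omega)
  refine ⟨a, (mem_sdiff.1 (ha ▸ mem_singleton_self a)).1, ?_⟩
  rw [← sdiff_singleton_eq_erase, ← ha, sdiff_sdiff_eq_self hts]

theorem idx_Icc {a b i : ℕ} (hi : i ≤ b + 1) : idx (Icc a b) i = i - a := by
  rw [idx, show (Icc a b).filter (· < i) = Ico a i by ext; simp; omega, Nat.card_Ico]

theorem idx_erase {s : Finset ℕ} {i : ℕ} (hi : i ∈ s) (j : ℕ) :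
    idx (s.erase i) j = if i < j then idx s j - 1 else idx s j := by
  rw [idx, idx, filter_erase]
  split_ifs with h
  · rw [card_erase_of_mem (mem_filter.2 ⟨hi, h⟩)]
  · rw [erase_eq_of_notMem (by simp [h])]

theorem sum_Icc_one_five_sdiff {M : Type*} [AddCommMonoid M] (s : Finset ℕ) (f : ℕ → M) :
    ∑ i ∈ Icc 1 5 \ s, f i = ∑ i ∈ {1, 2, 3, 4, 5}, if i ∈ s then 0 else f i := by
  rw [sum_ite, sum_const_zero, zero_add]
  congr 1
  ext i
  simp
  omega

section
variable {F}

theorem phiLin_apply (u : Finset ℕ) (j k : ℕ) (c : Finset ℕ → F × F) :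
    phiLin F u j k c = ∑ i ∈ u \ {j, k}, (-1 : F) ^ idx u i *
      ((phiRow (idx (u.erase i) j) (idx (u.erase i) k)).1 * (c (u.erase i)).1 +
       (phiRow (idx (u.erase i) j) (idx (u.erase i) k)).2 * (c (u.erase i)).2) := by
  simp [phiLin, evalX, evalY, mul_add, mul_left_comm]

theorem mem_permittedSub_iff {S : Finset ℕ} {c : Finset ℕ → F × F} :
    c ∈ PermittedSub F S ↔ Permitted F S c := by
  simp only [PermittedSub, Permitted, Submodule.mem_iInf, LinearMap.mem_ker, and_imp, Prod.forall]
  exact ⟨fun h u hu hc j hj k hk hjk => h u hu hc j k hj hk hjk,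
    fun h u hu hc j k hj hk hjk => h u hu hc j hj k hk hjk⟩

theorem mem_supported_iff {T : Set (Finset ℕ)} {c : Finset ℕ → F × F} :
    c ∈ Supported F T ↔ ∀ t ∉ T, c t = 0 := by
  simp [Supported, Submodule.mem_iInf]

def phiZ (u : Finset ℕ) (j k : ℕ) (z : Finset ℕ → ℤ × ℤ) : ℤ :=
  ∑ i ∈ u \ {j, k}, (-1) ^ idx u i *
    ((phiRow (idx (u.erase i) j) (idx (u.erase i) k)).1 * (z (u.erase i)).1 +
     (phiRow (idx (u.erase i) j) (idx (u.erase i) k)).2 * (z (u.erase i)).2)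

def psiZ (j k : ℕ) (t : Finset ℕ) : ℤ × ℤ :=
  if t ⊆ Icc 1 5 ∧ t.card = 4 ∧ j ∈ t ∧ k ∈ t then psiRow (idx t j) (idx t k) else 0

theorem phiLin_intCast (u : Finset ℕ) (j k : ℕ) (z : Finset ℕ → ℤ × ℤ) :
    phiLin F u j k (fun t => (((z t).1 : F), ((z t).2 : F))) = (phiZ u j k z : F) := by
  simp [phiLin_apply, phiZ]

theorem psiC_eq_intCast (j k : ℕ) :
    psiC F {t | t ⊆ Icc 1 5 ∧ t.card = 4} j k =
      fun t => (((psiZ j k t).1 : F), ((psiZ j k t).2 : F)) := by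
  funext t
  by_cases ht : t ⊆ Icc 1 5 ∧ t.card = 4 <;> by_cases hjk : j ∈ t ∧ k ∈ t <;>
    simp [psiC, psiVec, psiZ, ht, hjk, Prod.ext_iff]

set_option maxRecDepth 40000 in
theorem phiZ_Icc_psiZ_eq_zero : ∀ p ∈ Icc 1 5, ∀ q ∈ Icc 1 5, ∀ j ∈ Icc 1 5, ∀ k ∈ Icc 1 5,
    phiZ (Icc 1 5) p q (psiZ j k) = 0 := by
  decide

theorem psiC_mem_permittedSub_inf_supported {j k : ℕ} (hj : j ∈ Icc 1 5) (hk : k ∈ Icc 1 5) :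
    psiC F {t | t ⊆ Icc 1 5 ∧ t.card = 4} j k ∈
      PermittedSub F (Icc 1 5) ⊓ Supported F {t | t ⊆ Icc 1 5 ∧ t.card = 4} := by
  refine Submodule.mem_inf.2 ⟨mem_permittedSub_iff.2 ?_, mem_supported_iff.2 fun t ht => ?_⟩
  · intro u hu hcard p hp q hq _
    obtain rfl : u = Icc 1 5 := eq_of_subset_of_card_le hu (by simp [hcard])
    rw [psiC_eq_intCast, phiLin_intCast, phiZ_Icc_psiZ_eq_zero p hp q hq j hj k hk, Int.cast_zero]
  · simp [psiC, ht]

variable (F) in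
def edgeVectors : Set (Finset ℕ → F × F) :=
  {w | ∃ j ∈ Icc (1 : ℕ) 5, ∃ k ∈ Icc (1 : ℕ) 5, j < k ∧
    w = psiC F {t | t ⊆ Icc 1 5 ∧ t.card = 4} j k}

theorem span_edgeVectors_le :
    Submodule.span F (edgeVectors F) ≤
      PermittedSub F (Icc 1 5) ⊓ Supported F {t | t ⊆ Icc 1 5 ∧ t.card = 4} := by
  rw [Submodule.span_le]
  rintro _ ⟨j, hj, k, hk, -, rfl⟩
  exact psiC_mem_permittedSub_inf_supported hj hk

theorem psiC_mem_span_edgeVectors {j k : ℕ} (hj : j ∈ Icc 1 5) (hk : k ∈ Icc 1 5) (hjk : j < k) :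
    psiC F {t | t ⊆ Icc 1 5 ∧ t.card = 4} j k ∈ Submodule.span F (edgeVectors F) :=
  Submodule.subset_span ⟨j, hj, k, hk, hjk, rfl⟩

theorem exists_mem_span_edgeVectors_eq_on_faces (c : Finset ℕ → F × F) :
    ∃ s ∈ Submodule.span F (edgeVectors F), s ((Icc 1 5).erase 5) = c ((Icc 1 5).erase 5) ∧
      s ((Icc 1 5).erase 4) = c ((Icc 1 5).erase 4) ∧
      (s ((Icc 1 5).erase 3)).1 = (c ((Icc 1 5).erase 3)).1 := by
  set ψ := psiC F {t | t ⊆ Icc 1 5 ∧ t.card = 4}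
  obtain ⟨x₃, -⟩ := c ((Icc 1 5).erase 3)
  obtain ⟨x₄, y₄⟩ := c ((Icc 1 5).erase 4)
  obtain ⟨x₅, y₅⟩ := c ((Icc 1 5).erase 5)
  refine ⟨-x₃ • ψ 4 5 - x₄ • ψ 3 5 - y₄ • ψ 1 5 + (y₅ - x₅) • ψ 3 4 + y₅ • ψ 2 4, ?_, ?_⟩
  · apply_rules [add_mem, sub_mem, Submodule.smul_mem, psiC_mem_span_edgeVectors] <;> simp
  · simp [ψ, psiC, psiVec, idx_erase, idx_Icc, psiRow, erase_subset, -Icc_erase_right,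
      -Icc_erase_left]

theorem eq_zero_of_permitted_of_eq_zero_on_faces {c : Finset ℕ → F × F}
    (hc : c ∈ PermittedSub F (Icc 1 5) ⊓ Supported F {t | t ⊆ Icc 1 5 ∧ t.card = 4})
    (h5 : c ((Icc 1 5).erase 5) = 0) (h4 : c ((Icc 1 5).erase 4) = 0)
    (h3 : (c ((Icc 1 5).erase 3)).1 = 0) : c = 0 := by
  rw [Submodule.mem_inf, mem_permittedSub_iff, mem_supported_iff] at hc
  obtain ⟨hperm, hsupp⟩ := hc
  have hφ (j k : ℕ) (hj : j ∈ Icc 1 5) (hk : k ∈ Icc 1 5) (hjk : j < k) :=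
    hperm _ subset_rfl (by simp) j hj k hk hjk
  have e12 := hφ 1 2 (by simp) (by simp) (by simp)
  have e13 := hφ 1 3 (by simp) (by simp) (by simp)
  have e15 := hφ 1 5 (by simp) (by simp) (by simp)
  have e23 := hφ 2 3 (by simp) (by simp) (by simp)
  have e34 := hφ 3 4 (by simp) (by simp) (by simp)
  simp only [phiLin_apply, sum_Icc_one_five_sdiff] at e12 e13 e15 e23 e34
  simp [idx_erase, idx_Icc, phiRow, h4, h5, h3, -Icc_erase_right,
    -Icc_erase_left] at e12 e13 e15 e23 e34
  -- now `e12 : y₃ = 0`, `e13 : y₂ = 0`, `e15 : x₂ = 0`, `e23 : y₁ = 0`, `e34 : x₂ - x₁ = 0`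
  have x1 : (c ((Icc 1 5).erase 1)).1 = 0 := by linear_combination e15 - e34
  have hfaces (i : ℕ) (hi : i ∈ Icc 1 5) : c ((Icc 1 5).erase i) = 0 := by
    obtain ⟨hi1, hi5⟩ := mem_Icc.1 hi
    interval_cases i
    · exact Prod.ext x1 e23
    · exact Prod.ext e15 e13
    · exact Prod.ext h3 e12
    · exact h4
    · exact h5
  funext t
  by_cases ht : t ⊆ Icc 1 5 ∧ t.card = 4
  · obtain ⟨i, hi, rfl⟩ := exists_eq_erase_of_subset_of_card_add_one ht.1 (by simp [ht.2])
    exact hfaces i hi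
  · exact hsupp t ht

end

/-- the permitted colorings of `Δ⁴ = 12345` are exactly the linear span of
the ten edge vectors `ψ_b`, `b` an edge of `Δ⁴`. -/
theorem permitted_eq_span_edge_vectors :
    Submodule.span F
        {w : Finset ℕ → F × F |
          ∃ j ∈ Icc (1 : ℕ) 5, ∃ k ∈ Icc (1 : ℕ) 5, j < k ∧
            w = psiC F {t | t ⊆ Icc 1 5 ∧ t.card = 4} j k}
      = PermittedSub F (Icc 1 5) ⊓ Supported F {t | t ⊆ Icc 1 5 ∧ t.card = 4} := by
  refine le_antisymm span_edgeVectors_le fun c hc => ?_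
  obtain ⟨s, hs, h5, h4, h3⟩ := exists_mem_span_edgeVectors_eq_on_faces c
  have hcs : c - s = 0 :=
    eq_zero_of_permitted_of_eq_zero_on_faces (sub_mem hc (span_edgeVectors_le hs))
      (by rw [Pi.sub_apply, h5, sub_self]) (by rw [Pi.sub_apply, h4, sub_self])
      (by rw [Pi.sub_apply, Prod.fst_sub, h3, sub_self])
  rwa [sub_eq_zero.1 hcs]
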